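/- Let g : ℝ → ℝ² be twice continuously differentiable on an open interval containing the compact interval [a,b], injective on [a,b], with g'(ξ) ≠ 0 for all ξ ∈ [a,b]. Then there exists ε > 0 such that the Frenet map P(η,ξ) = g(ξ) + η n(ξ) is injective on the set [−ε,ε] × [a,b]. -/

import Mathlib

open Real Set

/-- The speed `‖g'(ξ)‖` (Euclidean norm of the derivative) of a planar curve. -/
noncomputable def speed (g : ℝ → ℝ × ℝ) (ξ : ℝ) : ℝ :=
  Real.sqrt ((deriv g ξ).1 ^ 2 + (deriv g ξ).2 ^ 2)

/-- The unit tangent vector `τ(ξ) = g'(ξ)/‖g'(ξ)‖`. -/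
noncomputable def unitTangent (g : ℝ → ℝ × ℝ) (ξ : ℝ) : ℝ × ℝ :=
  ((deriv g ξ).1 / speed g ξ, (deriv g ξ).2 / speed g ξ)

/-- The unit normal vector `n(ξ) = (τ₂(ξ), -τ₁(ξ))`. -/
noncomputable def unitNormal (g : ℝ → ℝ × ℝ) (ξ : ℝ) : ℝ × ℝ :=
  ((unitTangent g ξ).2, -(unitTangent g ξ).1)

/-- The signed curvature `κ(ξ) = (g₁'(ξ)g₂''(ξ) - g₂'(ξ)g₁''(ξ))/‖g'(ξ)‖³`. -/
noncomputable def signedCurvature (g : ℝ → ℝ × ℝ) (ξ : ℝ) : ℝ :=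
  ((deriv g ξ).1 * (deriv (deriv g) ξ).2 - (deriv g ξ).2 * (deriv (deriv g) ξ).1) /
    speed g ξ ^ 3


/-- The Frenet (tubular) map `P(η,ξ) = g(ξ) + η n(ξ)`, with argument `p = (η, ξ)`. -/
noncomputable def frenetMap (g : ℝ → ℝ × ℝ) (p : ℝ × ℝ) : ℝ × ℝ :=
  g p.2 + p.1 • unitNormal g p.2

/-!
At a point `(0, ξ)` the derivative of `P` is `(h, k) ↦ h • n(ξ) + k • g'(ξ)`, which is invertible
because `n(ξ)` is a unit vector orthogonal to `g'(ξ) ≠ 0`; by the inverse function theorem `P` is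
injective near each point of `{0} × [a,b]`. On `{0} × [a,b]` itself `P(0, ξ) = g(ξ)` is injective,
and compactness upgrades "injective on the compact set and near each of its points" to "injective
on a neighbourhood of it", which contains a tube `[-ε,ε] × [a,b]`.
-/

open Filter Topology

lemma speed_pos {g : ℝ → ℝ × ℝ} {ξ : ℝ} (hd : deriv g ξ ≠ 0) : 0 < speed g ξ := by
  refine Real.sqrt_pos.2 ?_
  contrapose! hd
  have h0 : (deriv g ξ).1 * (deriv g ξ).1 + (deriv g ξ).2 * (deriv g ξ).2 = 0 := by
    nlinarith [mul_self_nonneg (deriv g ξ).1, mul_self_nonneg (deriv g ξ).2]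
  obtain ⟨h₁, h₂⟩ := mul_self_add_mul_self_eq_zero.1 h0
  exact Prod.ext h₁ h₂

lemma unitNormal_det_deriv (g : ℝ → ℝ × ℝ) (ξ : ℝ) :
    (unitNormal g ξ).1 * (deriv g ξ).2 - (unitNormal g ξ).2 * (deriv g ξ).1 = speed g ξ := by
  have hsq : speed g ξ ^ 2 = (deriv g ξ).1 ^ 2 + (deriv g ξ).2 ^ 2 := Real.sq_sqrt (by positivity)
  simp only [unitNormal, unitTangent]
  rcases eq_or_ne (speed g ξ) 0 with h | h
  · simp [h]
  · field_simp
    linear_combination -hsq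

lemma contDiffAt_unitNormal {g : ℝ → ℝ × ℝ} {ξ : ℝ} {n : WithTop ℕ∞}
    (hg : ContDiffAt ℝ n (deriv g) ξ) (hd : deriv g ξ ≠ 0) :
    ContDiffAt ℝ n (unitNormal g) ξ := by
  have hs : ContDiffAt ℝ n (speed g) ξ :=
    (((contDiffAt_fst.comp ξ hg).pow 2).add ((contDiffAt_snd.comp ξ hg).pow 2)).sqrt
      (Real.sqrt_pos.1 (speed_pos hd)).ne'
  exact ((contDiffAt_snd.comp ξ hg).div hs (speed_pos hd).ne').prodMk
    ((contDiffAt_fst.comp ξ hg).div hs (speed_pos hd).ne').neg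

lemma frenetMap_zero (g : ℝ → ℝ × ℝ) (ξ : ℝ) : frenetMap g (0, ξ) = g ξ := by
  simp [frenetMap]

lemma injective_smul_add_smul {u v : ℝ × ℝ} (h : u.1 * v.2 - u.2 * v.1 ≠ 0) :
    Function.Injective fun p : ℝ × ℝ => p.1 • u + p.2 • v := by
  rintro ⟨s, t⟩ ⟨s', t'⟩ hst
  simp only [Prod.ext_iff, Prod.fst_add, Prod.snd_add, Prod.smul_fst, Prod.smul_snd,
    smul_eq_mul] at hst
  obtain ⟨h₁, h₂⟩ := hst
  have hs : s = s' := by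
    refine mul_right_cancel₀ h ?_
    linear_combination v.2 * h₁ - v.1 * h₂
  subst hs
  have ht : t = t' := by
    refine mul_right_cancel₀ h ?_
    linear_combination -u.2 * h₁ + u.1 * h₂
  rw [ht]

noncomputable def frameEquiv (u v : ℝ × ℝ) (h : u.1 * v.2 - u.2 * v.1 ≠ 0) :
    (ℝ × ℝ) ≃L[ℝ] ℝ × ℝ :=
  (LinearEquiv.ofInjectiveEndo ((LinearMap.fst ℝ ℝ ℝ).smulRight u +
    (LinearMap.snd ℝ ℝ ℝ).smulRight v) (injective_smul_add_smul h)).toContinuousLinearEquiv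

@[simp]
lemma frameEquiv_apply (u v : ℝ × ℝ) (h : u.1 * v.2 - u.2 * v.1 ≠ 0) (p : ℝ × ℝ) :
    frameEquiv u v h p = p.1 • u + p.2 • v :=
  rfl

lemma hasStrictFDerivAt_frenetMap {g : ℝ → ℝ × ℝ} {ξ : ℝ} (hg : ContDiffAt ℝ 2 g ξ)
    (hd : deriv g ξ ≠ 0) :
    HasStrictFDerivAt (frenetMap g) (frameEquiv (unitNormal g ξ) (deriv g ξ)
      (by rw [unitNormal_det_deriv]; exact (speed_pos hd).ne') : (ℝ × ℝ) →L[ℝ] ℝ × ℝ) (0, ξ) := by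
  have hg' : HasStrictDerivAt g (deriv g ξ) ξ := hg.hasStrictDerivAt two_ne_zero
  have hN : HasStrictDerivAt (unitNormal g) (deriv (unitNormal g) ξ) ξ :=
    (contDiffAt_unitNormal (hg.derivWithin (m := 1) le_rfl) hd).hasStrictDerivAt one_ne_zero
  have hsnd : HasStrictFDerivAt (Prod.snd : ℝ × ℝ → ℝ) (ContinuousLinearMap.snd ℝ ℝ ℝ)
      ((0 : ℝ), ξ) :=
    hasStrictFDerivAt_snd
  have := (hg'.hasStrictFDerivAt.comp _ hsnd).add
    (hasStrictFDerivAt_fst.smul (hN.hasStrictFDerivAt.comp _ hsnd))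
  refine this.congr_fderiv ?_
  ext <;> simp [add_comm]

lemma HasStrictFDerivAt.exists_mem_nhds_injOn {E F : Type*} [NormedAddCommGroup E]
    [NormedSpace ℝ E] [CompleteSpace E] [NormedAddCommGroup F] [NormedSpace ℝ F]
    {f : E → F} {f' : E ≃L[ℝ] F} {a : E} (hf : HasStrictFDerivAt f (f' : E →L[ℝ] F) a) :
    ∃ u ∈ 𝓝 a, InjOn f u :=
  ⟨_, hf.toOpenPartialHomeomorph f |>.open_source.mem_nhds hf.mem_toOpenPartialHomeomorph_source,
    by simpa only [hf.toOpenPartialHomeomorph_coe] using (hf.toOpenPartialHomeomorph f).injOn⟩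

lemma exists_Icc_prod_subset_of_mem_nhdsSet {Y : Type*} [TopologicalSpace Y] {K : Set Y}
    (hK : IsCompact K) {x : ℝ} {t : Set (ℝ × Y)} (ht : t ∈ 𝓝ˢ ({x} ×ˢ K)) :
    ∃ ε > 0, Icc (x - ε) (x + ε) ×ˢ K ⊆ t := by
  rw [isCompact_singleton.nhdsSet_prod_eq hK, nhdsSet_singleton, mem_prod_iff] at ht
  obtain ⟨u, hu, v, hv, huv⟩ := ht
  obtain ⟨ε, hε, hεu⟩ := (nhds_basis_Icc_pos x).mem_iff.1 hu
  exact ⟨ε, hε, (prod_mono hεu (subset_of_mem_nhdsSet hv)).trans huv⟩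

lemma injOn_frenetMap_zero_prod {g : ℝ → ℝ × ℝ} {s : Set ℝ} (hg : InjOn g s) :
    InjOn (frenetMap g) ({0} ×ˢ s) := by
  rintro ⟨_, ξ⟩ ⟨rfl, hξ⟩ ⟨_, ξ'⟩ ⟨rfl, hξ'⟩ h
  rw [frenetMap_zero, frenetMap_zero] at h
  exact congrArg _ (hg hξ hξ' h)

theorem frenetMap_injective_tube_general (g : ℝ → ℝ × ℝ) (a b c d : ℝ)
    (hsub : Icc a b ⊆ Ioo c d)
    (hg : ContDiffOn ℝ 2 g (Ioo c d))
    (hinj : Set.InjOn g (Icc a b))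
    (hg' : ∀ ξ ∈ Icc a b, deriv g ξ ≠ 0) :
    ∃ ε > 0, Set.InjOn (frenetMap g) (Icc (-ε) ε ×ˢ Icc a b) := by
  have hC2 : ∀ ξ ∈ Icc a b, ContDiffAt ℝ 2 g ξ := fun ξ hξ =>
    hg.contDiffAt (isOpen_Ioo.mem_nhds (hsub hξ))
  obtain ⟨t, ht, htinj⟩ := (injOn_frenetMap_zero_prod hinj).exists_mem_nhdsSet
    (isCompact_singleton.prod isCompact_Icc)
    (by rintro ⟨_, ξ⟩ ⟨rfl, hξ⟩
        exact (hasStrictFDerivAt_frenetMap (hC2 ξ hξ) (hg' ξ hξ)).continuousAt)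
    (by rintro ⟨_, ξ⟩ ⟨rfl, hξ⟩
        exact (hasStrictFDerivAt_frenetMap (hC2 ξ hξ) (hg' ξ hξ)).exists_mem_nhds_injOn)
  obtain ⟨ε, hε, hεt⟩ := exists_Icc_prod_subset_of_mem_nhdsSet isCompact_Icc ht
  exact ⟨ε, hε, htinj.mono (by simpa using hεt)⟩

/-- If `g` is C² on an open interval containing the compact interval `[a,b]`, injective on
`[a,b]`, with `g' ≠ 0` on `[a,b]`, then there exists `ε > 0` such that the Frenet map
`P(η,ξ) = g(ξ) + η n(ξ)` is injective on `[-ε,ε] × [a,b]`. -/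
theorem frenetMap_injective_tube (g : ℝ → ℝ × ℝ) (a b c d : ℝ) (hab : a ≤ b)
    (hsub : Icc a b ⊆ Ioo c d)
    (hg : ContDiffOn ℝ 2 g (Ioo c d))
    (hinj : Set.InjOn g (Icc a b))
    (hg' : ∀ ξ ∈ Icc a b, deriv g ξ ≠ 0) :
    ∃ ε > 0, Set.InjOn (frenetMap g) (Icc (-ε) ε ×ˢ Icc a b) :=
  frenetMap_injective_tube_general g a b c d hsub hg hinj hg'
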